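/- (Mirror marginal price relation, charge–charge pair with slack above.) Let T ≥ 1 be a horizon, C : {1,…,T} → ℝ prices, S^end ∈ ℝ, and let x = (p^C, p^D, s) ∈ X(S^end) be an optimal schedule of F(T, C, S^end). Suppose t₁ < t₂ are in {1,…,T} with p^D_{t₁} = 0, p^C_{t₁} < P̄^C, p^C_{t₂} > 0, and s_t < S̄ for all t ∈ {t₁,…,t₂−1}. Then C_{t₁} ≥ ρ^{t₂−t₁} C_{t₂}. -/

import Mathlib

open Finset

/-- Parameters of the energy storage system. -/
structure Params where
  Δt : ℝ
  ρ : ℝ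
  ηC : ℝ
  ηD : ℝ
  PC : ℝ
  PD : ℝ
  Slo : ℝ
  Shi : ℝ
  Sinit : ℝ

/-- Validity of the parameters: Δt > 0, ρ ∈ (0,1], ηC, ηD ∈ (0,1],
P̄^C > 0, P̄^D > 0, S̲ ≤ S̄, S̲ ≤ S^init ≤ S̄. -/
def Params.Valid (P : Params) : Prop :=
  0 < P.Δt ∧ 0 < P.ρ ∧ P.ρ ≤ 1 ∧ 0 < P.ηC ∧ P.ηC ≤ 1 ∧ 0 < P.ηD ∧ P.ηD ≤ 1 ∧
  0 < P.PC ∧ 0 < P.PD ∧ P.Slo ≤ P.Shi ∧ P.Slo ≤ P.Sinit ∧ P.Sinit ≤ P.Shi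

/-- A feasible schedule over the horizon {1,…,T}, with the convention s 0 = S^init. -/
def Feasible (P : Params) (T : ℕ) (pC pD s : ℕ → ℝ) : Prop :=
  s 0 = P.Sinit ∧
  ∀ t : ℕ, 1 ≤ t → t ≤ T →
    (s t = P.ρ * s (t - 1) + P.Δt * (P.ηC * pC t - pD t / P.ηD) ∧
     P.Slo ≤ s t ∧ s t ≤ P.Shi ∧
     0 ≤ pC t ∧ pC t ≤ P.PC ∧
     0 ≤ pD t ∧ pD t ≤ P.PD ∧
     pC t * pD t = 0)

/-- Profit Z = Σ_{t=1}^{T} Δt C_t (p^D_t − p^C_t). -/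
noncomputable def profit (P : Params) (T : ℕ) (C pC pD : ℕ → ℝ) : ℝ :=
  ∑ t ∈ Finset.Icc 1 T, P.Δt * C t * (pD t - pC t)

/-- Optimal schedule of F(T, C, S^end): feasible, meets the terminal constraint
s_T = S^end, and maximizes profit among such schedules. -/
def Optimal (P : Params) (T : ℕ) (C : ℕ → ℝ) (Send : ℝ) (pC pD s : ℕ → ℝ) : Prop :=
  Feasible P T pC pD s ∧ s T = Send ∧
  ∀ qC qD r : ℕ → ℝ, Feasible P T qC qD r → r T = Send →
    profit P T C qC qD ≤ profit P T C pC pD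

/-- Minimum reachable level S̲_T at the end of the planning horizon. -/
noncomputable def SloT (P : Params) (T : ℕ) : ℝ :=
  max P.Slo (P.ρ ^ T * P.Sinit - P.Δt * (P.PD / P.ηD) * ∑ t ∈ Finset.range T, P.ρ ^ t)

/-- Maximum reachable level S̄_T at the end of the planning horizon. -/
noncomputable def ShiT (P : Params) (T : ℕ) : ℝ :=
  min P.Shi (P.ρ ^ T * P.Sinit + P.Δt * P.ηC * P.PC * ∑ t ∈ Finset.range T, P.ρ ^ t)

/- Moving a small amount ε of charging from t₂ back to t₁ (ε more at t₁, ρ^(t₂−t₁) ε less at t₂)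
raises the state of energy by Δt ηC ρ^(t−t₁) ε on {t₁,…,t₂−1} and leaves it unchanged elsewhere,
in particular at T. The slack assumptions make this perturbation feasible for all small ε > 0,
and it changes the profit by Δt ε (ρ^(t₂−t₁) C_{t₂} − C_{t₁}), which optimality forces to be ≤ 0. -/

open Filter Topology

namespace Params

variable (P : Params)

def chargeShift (pC : ℕ → ℝ) (t₁ t₂ : ℕ) (ε : ℝ) (t : ℕ) : ℝ :=
  pC t + (if t = t₁ then ε else 0) - (if t = t₂ then P.ρ ^ (t₂ - t₁) * ε else 0)

def stateShift (s : ℕ → ℝ) (t₁ t₂ : ℕ) (ε : ℝ) (t : ℕ) : ℝ :=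
  s t + if t ∈ Ico t₁ t₂ then P.Δt * P.ηC * P.ρ ^ (t - t₁) * ε else 0

variable {P} {pC pD s : ℕ → ℝ} {t₁ t₂ t : ℕ} {ε : ℝ}

theorem chargeShift_left (h12 : t₁ < t₂) : P.chargeShift pC t₁ t₂ ε t₁ = pC t₁ + ε := by
  simp [chargeShift, h12.ne]

theorem chargeShift_right (h12 : t₁ < t₂) :
    P.chargeShift pC t₁ t₂ ε t₂ = pC t₂ - P.ρ ^ (t₂ - t₁) * ε := by
  simp [chargeShift, h12.ne']

theorem chargeShift_of_ne (h₁ : t ≠ t₁) (h₂ : t ≠ t₂) : P.chargeShift pC t₁ t₂ ε t = pC t := by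
  simp [chargeShift, h₁, h₂]

theorem stateShift_of_notMem (h : t ∉ Ico t₁ t₂) : P.stateShift s t₁ t₂ ε t = s t := by
  simp [stateShift, h]

theorem stateShift_step (h12 : t₁ < t₂) (ht : 1 ≤ t)
    (hs : s t = P.ρ * s (t - 1) + P.Δt * (P.ηC * pC t - pD t / P.ηD)) :
    P.stateShift s t₁ t₂ ε t =
      P.ρ * P.stateShift s t₁ t₂ ε (t - 1) +
        P.Δt * (P.ηC * P.chargeShift pC t₁ t₂ ε t - pD t / P.ηD) := by
  have hpow (h : t₁ < t) : P.ρ ^ (t - t₁) = P.ρ * P.ρ ^ (t - 1 - t₁) := by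
    rw [← pow_succ']
    congr 1
    omega
  simp only [stateShift, chargeShift, mem_Ico]
  split_ifs <;> subst_vars <;> try omega
  all_goals
    try rw [hpow (by omega)]
    try simp only [Nat.sub_self, pow_zero]
    linear_combination hs

theorem profit_chargeShift {T : ℕ} (C : ℕ → ℝ) (ht₁ : t₁ ∈ Icc 1 T) (ht₂ : t₂ ∈ Icc 1 T) :
    profit P T C (P.chargeShift pC t₁ t₂ ε) pD =
      profit P T C pC pD - P.Δt * ε * (C t₁ - P.ρ ^ (t₂ - t₁) * C t₂) := by
  simp only [profit, chargeShift, mul_sub, mul_add, sum_sub_distrib, sum_add_distrib, mul_ite,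
    mul_zero, sum_ite_eq', ht₁, ht₂, if_true]
  ring

end Params

section

open Params

variable {P : Params} {pC pD s : ℕ → ℝ} {t₁ t₂ t : ℕ} {ε : ℝ}

theorem Feasible.discharge_eq_zero {T : ℕ} (hx : Feasible P T pC pD s) (ht : 1 ≤ t) (htT : t ≤ T)
    (hc : pC t ≠ 0) : pD t = 0 :=
  (mul_eq_zero.1 (hx.2 t ht htT).2.2.2.2.2.2.2).resolve_left hc

theorem Feasible.shift {T : ℕ} (hP : P.Valid) (hx : Feasible P T pC pD s) (ht₁ : 1 ≤ t₁)
    (h12 : t₁ < t₂) (hε : 0 ≤ ε) (hd₁ : pD t₁ = 0) (hd₂ : pD t₂ = 0) (hcap : pC t₁ + ε ≤ P.PC)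
    (hcharge : P.ρ ^ (t₂ - t₁) * ε ≤ pC t₂)
    (hroom : ∀ t ∈ Ico t₁ t₂, s t + P.Δt * P.ηC * P.ρ ^ (t - t₁) * ε ≤ P.Shi) :
    Feasible P T (P.chargeShift pC t₁ t₂ ε) pD (P.stateShift s t₁ t₂ ε) := by
  obtain ⟨hΔt, hρ, -, hηC, -⟩ := hP
  obtain ⟨hs₀, hstep⟩ := hx
  refine ⟨by rwa [stateShift_of_notMem (by simp; omega)], fun t ht htT => ?_⟩
  obtain ⟨hdyn, hlo, hhi, hc₀, hcP, hd₀, hdP, hcd⟩ := hstep t ht htT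
  have hinc : 0 ≤ P.Δt * P.ηC * P.ρ ^ (t - t₁) * ε := by positivity
  have hmoved : 0 ≤ P.ρ ^ (t₂ - t₁) * ε := by positivity
  have hq : 0 ≤ P.chargeShift pC t₁ t₂ ε t ∧ P.chargeShift pC t₁ t₂ ε t ≤ P.PC ∧
      P.chargeShift pC t₁ t₂ ε t * pD t = 0 := by
    obtain rfl | h₁ := eq_or_ne t t₁
    · rw [chargeShift_left h12, hd₁]
      exact ⟨by linarith, hcap, mul_zero _⟩
    obtain rfl | h₂ := eq_or_ne t t₂
    · rw [chargeShift_right h12, hd₂]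
      exact ⟨by linarith, by linarith, mul_zero _⟩
    rw [chargeShift_of_ne h₁ h₂]
    exact ⟨hc₀, hcP, hcd⟩
  refine ⟨stateShift_step h12 ht hdyn, ?_, ?_, hq.1, hq.2.1, hd₀, hdP, hq.2.2⟩
  · unfold stateShift
    split_ifs <;> linarith
  · by_cases h : t ∈ Ico t₁ t₂
    · simpa [stateShift, h] using hroom t h
    · rwa [stateShift_of_notMem h]

theorem eventually_add_mul_le {a b c : ℝ} (h : a < c) :
    ∀ᶠ ε in 𝓝[>] (0 : ℝ), a + b * ε ≤ c :=
  (((continuous_const.add (continuous_const.mul continuous_id)).tendsto' 0 a (by simp)).mono_left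
    nhdsWithin_le_nhds).eventually_le_const h

theorem eventually_feasible_shift {T : ℕ} (hP : P.Valid) (hx : Feasible P T pC pD s)
    (ht₁ : 1 ≤ t₁) (h12 : t₁ < t₂) (hd₁ : pD t₁ = 0) (hd₂ : pD t₂ = 0)
    (hslack : pC t₁ < P.PC) (hc : 0 < pC t₂) (hs : ∀ t ∈ Ico t₁ t₂, s t < P.Shi) :
    ∀ᶠ ε in 𝓝[>] 0, Feasible P T (P.chargeShift pC t₁ t₂ ε) pD (P.stateShift s t₁ t₂ ε) := by
  filter_upwards [self_mem_nhdsWithin, eventually_add_mul_le (b := 1) hslack,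
    eventually_add_mul_le (a := 0) (b := P.ρ ^ (t₂ - t₁)) hc,
    (eventually_all_finset _).2 fun t ht => eventually_add_mul_le (hs t ht)]
    with ε hε hcap hcharge hroom
  exact hx.shift hP ht₁ h12 hε.le hd₁ hd₂ (by simpa using hcap) (by simpa using hcharge) hroom

end

theorem mirror_charge_charge_general (P : Params) (hP : P.Valid) (T : ℕ)
    (C : ℕ → ℝ) (Send : ℝ) (pC pD s : ℕ → ℝ) (hx : Optimal P T C Send pC pD s)
    (t₁ t₂ : ℕ) (ht₁ : 1 ≤ t₁) (h12 : t₁ < t₂) (ht₂ : t₂ ≤ T)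
    (hd : pD t₁ = 0) (hslack : pC t₁ < P.PC) (hc : 0 < pC t₂)
    (hs : ∀ t : ℕ, t₁ ≤ t → t ≤ t₂ - 1 → s t < P.Shi) :
    P.ρ ^ (t₂ - t₁) * C t₂ ≤ C t₁ := by
  obtain ⟨hfeas, hsT, hopt⟩ := hx
  have hd₂ : pD t₂ = 0 := hfeas.discharge_eq_zero (by omega) ht₂ hc.ne'
  obtain ⟨ε, hε, hfeasε⟩ := (eventually_mem_nhdsWithin.and <|
    eventually_feasible_shift hP hfeas ht₁ h12 hd hd₂ hslack hc fun t ht =>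
      hs t (mem_Ico.1 ht).1 (Nat.le_sub_one_of_lt (mem_Ico.1 ht).2)).exists
  have hgain := hopt _ _ _ hfeasε (by rwa [P.stateShift_of_notMem (by simp; omega)])
  rw [P.profit_chargeShift C (by simp; omega) (by simp; omega)] at hgain
  have hmargin : 0 ≤ C t₁ - P.ρ ^ (t₂ - t₁) * C t₂ :=
    (mul_nonneg_iff_of_pos_left (mul_pos hP.1 hε)).1 (by linarith)
  linarith

/-- Mirror marginal price relation (charge–charge pair with slack above):
if an optimal schedule does not discharge at t₁ and has slack charge capacity
there, charges at t₂ > t₁, with the state of energy strictly below S̄ on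
{t₁,…,t₂−1}, then C_{t₁} ≥ ρ^{t₂−t₁} C_{t₂}. -/
theorem mirror_charge_charge (P : Params) (hP : P.Valid) (T : ℕ) (hT : 1 ≤ T)
    (C : ℕ → ℝ) (Send : ℝ) (pC pD s : ℕ → ℝ) (hx : Optimal P T C Send pC pD s)
    (t₁ t₂ : ℕ) (ht₁ : 1 ≤ t₁) (h12 : t₁ < t₂) (ht₂ : t₂ ≤ T)
    (hd : pD t₁ = 0) (hslack : pC t₁ < P.PC) (hc : 0 < pC t₂)
    (hs : ∀ t : ℕ, t₁ ≤ t → t ≤ t₂ - 1 → s t < P.Shi) :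
    P.ρ ^ (t₂ - t₁) * C t₂ ≤ C t₁ :=
  mirror_charge_charge_general P hP T C Send pC pD s hx t₁ t₂ ht₁ h12 ht₂ hd hslack hc hs
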